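/- arXiv:0803.2112 — 2 statements merged into one kernel-verified Lean document; each statement's English description precedes it below -/
import Mathlib

section
/- For s ≥ 4, n ≥ s and 1 ≤ i ≤ ⌊n/2⌋, γ^{(s)}(n,i) = γ^{(s)}(n−1,i−1) + (s−2)·γ^{(s)}(n−1,i) + γ^{(s)}(n−1,i+1) − r_1^{(s)}(n−1,i−1) − Σ_{j=3}^{s−1} r_j^{(s)}(n−1,i). -/
open Finset Filter Topology

/-- Cells of a Young diagram given by its list of column lengths:
`(c, r)` means row `r` of column `c`. -/
def Cells (lam : List ℕ) : Set (ℕ × ℕ) :=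
  {p | p.1 < lam.length ∧ p.2 < lam.getD p.1 0}

/-- `T` is a standard Young tableau of (column-lengths) shape `lam`:
it is a bijection from the cells onto `{1, …, lam.sum}`, strictly
increasing along each column and each row, and `0` outside the diagram. -/
def IsSYT (lam : List ℕ) (T : ℕ × ℕ → ℕ) : Prop :=
  Set.BijOn T (Cells lam) (Set.Icc 1 lam.sum) ∧
  (∀ p ∈ Cells lam, ∀ q ∈ Cells lam, p.1 = q.1 → p.2 < q.2 → T p < T q) ∧
  (∀ p ∈ Cells lam, ∀ q ∈ Cells lam, p.2 = q.2 → p.1 < q.1 → T p < T q) ∧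
  (∀ p, p ∉ Cells lam → T p = 0)

/-- The number of standard Young tableaux of a fixed column-shape. -/
noncomputable def sytCount (lam : List ℕ) : ℕ :=
  Nat.card {T : ℕ × ℕ → ℕ // IsSYT lam T}

/-- Standard Young tableaux on `n` cells, with at most `s` columns
(column lengths positive and weakly decreasing), such that the difference
between the lengths of the second and third columns equals `i`. -/
def Y (s n i : ℕ) : Set (List ℕ × (ℕ × ℕ → ℕ)) :=
  {p | p.1.length ≤ s ∧ p.1.Pairwise (· ≥ ·) ∧ (∀ x ∈ p.1, 0 < x) ∧
       p.1.sum = n ∧ p.1.getD 1 0 - p.1.getD 2 0 = i ∧ IsSYT p.1 p.2}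

/-- `gamma s n i = |Y s n i|`. -/
noncomputable def gamma (s n i : ℕ) : ℕ := Nat.card (Y s n i)

/-- `rj s j m i` : the number of standard Young tableaux on `m` cells with at
most `s` columns whose second and third column lengths differ by `i`, and
whose `j`-th and `(j+1)`-th columns have the same length. -/
noncomputable def rj (s j m i : ℕ) : ℕ :=
  Nat.card {p : List ℕ × (ℕ × ℕ → ℕ) //
    p ∈ Y s m i ∧ p.1.getD (j - 1) 0 = p.1.getD j 0}

/-!
Remove the cell holding the largest entry `n`. It is a corner of the diagram, so this is a
bijection between tableaux on `n` cells whose `n` lies in column `c` and tableaux on `n - 1`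
cells to which a cell can be added in column `c`. Adding a cell to the second (third) column
raises (lowers) the difference of the second and third column lengths by one and adding it
elsewhere leaves it unchanged. Column `c ≠ 0` cannot take a new cell exactly when columns `c - 1`
and `c` have equal length, which is what the `r_j` correct for; the third column can always take
one when the difference is positive.
-/

namespace SYT

variable {l l₁ l₂ : List ℕ} {c : ℕ}

lemma getD_antitone (h : l.Pairwise (· ≥ ·)) {a b : ℕ} (hab : a ≤ b) :
    l.getD b 0 ≤ l.getD a 0 := by
  rcases lt_or_ge b l.length with hb | hb
  · rw [List.getD_eq_getElem _ _ hb, List.getD_eq_getElem _ _ (hab.trans_lt hb)]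
    rcases hab.eq_or_lt with rfl | hab
    · exact le_rfl
    · exact List.pairwise_iff_getElem.1 h a b _ hb hab
  · rw [List.getD_eq_default _ _ hb]
    exact Nat.zero_le _

lemma getD_pos_iff (hpos : ∀ x ∈ l, 0 < x) : 0 < l.getD c 0 ↔ c < l.length := by
  refine ⟨fun h => ?_, fun h => ?_⟩
  · by_contra hc
    rw [List.getD_eq_default _ _ (not_lt.1 hc)] at h
    exact h.false
  · rw [List.getD_eq_getElem _ _ h]
    exact hpos _ (List.getElem_mem h)

lemma mem_cells_iff (hpos : ∀ x ∈ l, 0 < x) {q : ℕ × ℕ} :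
    q ∈ Cells l ↔ q.2 < l.getD q.1 0 :=
  ⟨And.right, fun h => ⟨(getD_pos_iff hpos).1 (q.2.zero_le.trans_lt h), h⟩⟩

lemma eq_of_getD_eq (h₁ : ∀ x ∈ l₁, 0 < x) (h₂ : ∀ x ∈ l₂, 0 < x)
    (h : ∀ c, l₁.getD c 0 = l₂.getD c 0) : l₁ = l₂ := by
  have hlen : l₁.length = l₂.length :=
    eq_of_forall_lt_iff fun c => by rw [← getD_pos_iff h₁, ← getD_pos_iff h₂, h]
  refine List.ext_getElem hlen fun c hc₁ hc₂ => ?_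
  rw [← List.getD_eq_getElem _ 0 hc₁, ← List.getD_eq_getElem _ 0 hc₂, h]

lemma eq_of_cells_eq (h₁ : ∀ x ∈ l₁, 0 < x) (h₂ : ∀ x ∈ l₂, 0 < x)
    (h : Cells l₁ = Cells l₂) : l₁ = l₂ :=
  eq_of_getD_eq h₁ h₂ fun c => eq_of_forall_lt_iff fun r => by
    rw [← mem_cells_iff h₁ (q := (c, r)), ← mem_cells_iff h₂ (q := (c, r)), h]

lemma getD_le_sum (l : List ℕ) (c : ℕ) : l.getD c 0 ≤ l.sum := by
  rcases lt_or_ge c l.length with h | h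
  · rw [List.getD_eq_getElem _ _ h]
    exact List.le_sum_of_mem (List.getElem_mem h)
  · rw [List.getD_eq_default _ _ h]
    exact Nat.zero_le _

lemma length_le_sum (hpos : ∀ x ∈ l, 0 < x) : l.length ≤ l.sum := by
  simpa using List.length_le_sum_of_one_le l hpos

lemma pairwise_ge_of_getD (h : ∀ a b, a ≤ b → l.getD b 0 ≤ l.getD a 0) :
    l.Pairwise (· ≥ ·) := by
  refine List.pairwise_iff_getElem.2 fun a b ha hb hab => ?_
  rw [← List.getD_eq_getElem _ 0 ha, ← List.getD_eq_getElem _ 0 hb]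
  exact h a b hab.le

lemma sum_set_add_getD (hc : c < l.length) (v : ℕ) :
    (l.set c v).sum + l.getD c 0 = l.sum + v := by
  rw [List.sum_set, if_pos hc, ← List.sum_take_add_sum_drop l c, ← List.getElem_cons_drop hc,
    List.sum_cons, List.getD_eq_getElem _ _ hc]
  omega

def addCell (c : ℕ) (l : List ℕ) : List ℕ :=
  if c < l.length then l.set c (l.getD c 0 + 1) else l ++ [1]

-- Meant for a column `c` ending in a removable corner: a column of length one is then the last.
def removeCell (c : ℕ) (l : List ℕ) : List ℕ :=
  if l.getD c 0 = 1 then l.take c else l.set c (l.getD c 0 - 1)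

/-- Columns are `0`-indexed, so for `c ≥ 1` the tableaux counted by `rj s c` are exactly those
whose shape is not `Addable c`. -/
def Addable (c : ℕ) (l : List ℕ) : Prop :=
  c = 0 ∨ l.getD c 0 < l.getD (c - 1) 0

lemma Addable.le_length (hpos : ∀ x ∈ l, 0 < x) (h : Addable c l) : c ≤ l.length := by
  rcases h with rfl | h
  · exact Nat.zero_le _
  · have := (getD_pos_iff hpos).1 (Nat.zero_le _ |>.trans_lt h)
    omega

lemma getD_addCell (hc : c ≤ l.length) (k : ℕ) :
    (addCell c l).getD k 0 = l.getD k 0 + if k = c then 1 else 0 := by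
  simp only [addCell, List.getD_eq_getElem?_getD]
  split_ifs <;> simp_all [List.getElem?_set, List.getElem?_append] <;> grind

lemma sum_addCell (c : ℕ) (l : List ℕ) : (addCell c l).sum = l.sum + 1 := by
  unfold addCell
  split_ifs with h
  · have := sum_set_add_getD h (l.getD c 0 + 1)
    omega
  · simp

lemma length_addCell (hc : c ≤ l.length) : (addCell c l).length = max l.length (c + 1) := by
  unfold addCell
  split_ifs <;> simp <;> omega

lemma pos_addCell (c : ℕ) (hpos : ∀ x ∈ l, 0 < x) : ∀ x ∈ addCell c l, 0 < x := by
  unfold addCell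
  split_ifs
  · intro x hx
    rcases List.mem_or_eq_of_mem_set hx with h | rfl
    exacts [hpos x h, Nat.succ_pos _]
  · intro x hx
    rcases List.mem_append.1 hx with h | h
    exacts [hpos x h, by simp_all]

lemma pairwise_addCell (hc : c ≤ l.length) (hs : l.Pairwise (· ≥ ·))
    (hadd : Addable c l) : (addCell c l).Pairwise (· ≥ ·) := by
  refine pairwise_ge_of_getD fun a b hab => ?_
  rw [getD_addCell hc, getD_addCell hc]
  have := getD_antitone hs hab
  split_ifs with hb <;> try omega
  subst hb
  rcases hadd with rfl | h
  · omega
  · have := getD_antitone hs (show a ≤ b - 1 by omega)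
    omega

lemma cells_addCell (hc : c ≤ l.length) (hpos : ∀ x ∈ l, 0 < x) :
    Cells (addCell c l) = insert (c, l.getD c 0) (Cells l) := by
  ext ⟨a, r⟩
  simp only [mem_cells_iff (pos_addCell c hpos), mem_cells_iff hpos, getD_addCell hc,
    Set.mem_insert_iff, Prod.mk.injEq]
  split_ifs with h
  · subst h; omega
  · simp [h]

lemma lt_length_of_corner (hpos : ∀ x ∈ l, 0 < x) (hcorner : l.getD (c + 1) 0 < l.getD c 0) :
    c < l.length :=
  (getD_pos_iff hpos).1 (Nat.zero_le _ |>.trans_lt hcorner)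

lemma length_eq_of_corner (hpos : ∀ x ∈ l, 0 < x) (hcorner : l.getD (c + 1) 0 < l.getD c 0)
    (h : l.getD c 0 = 1) : l.length = c + 1 := by
  have := lt_length_of_corner hpos hcorner
  by_contra hne
  have := (getD_pos_iff hpos).2 (show c + 1 < l.length by omega)
  omega

lemma getD_removeCell (hpos : ∀ x ∈ l, 0 < x) (hcorner : l.getD (c + 1) 0 < l.getD c 0)
    (k : ℕ) : (removeCell c l).getD k 0 = l.getD k 0 - if k = c then 1 else 0 := by
  have hc := lt_length_of_corner hpos hcorner
  have hlen := length_eq_of_corner hpos hcorner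
  simp only [removeCell, List.getD_eq_getElem?_getD] at *
  split_ifs <;> simp_all [List.getElem?_take, List.getElem?_set] <;> grind

lemma sum_removeCell (hpos : ∀ x ∈ l, 0 < x) (hcorner : l.getD (c + 1) 0 < l.getD c 0) :
    (removeCell c l).sum + 1 = l.sum := by
  have hc := lt_length_of_corner hpos hcorner
  unfold removeCell
  split_ifs with h
  · rw [← List.sum_take_add_sum_drop l c, ← List.getElem_cons_drop hc,
      List.drop_eq_nil_of_le (length_eq_of_corner hpos hcorner h).le,
      ← List.getD_eq_getElem _ 0 hc, h]
    simp
  · have := sum_set_add_getD hc (l.getD c 0 - 1)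
    omega

lemma length_removeCell_le (c : ℕ) (l : List ℕ) : (removeCell c l).length ≤ l.length := by
  unfold removeCell
  split_ifs <;> simp

lemma pos_removeCell (hpos : ∀ x ∈ l, 0 < x) (hcorner : l.getD (c + 1) 0 < l.getD c 0) :
    ∀ x ∈ removeCell c l, 0 < x := by
  unfold removeCell
  split_ifs with h
  · exact fun x hx => hpos x (List.mem_of_mem_take hx)
  · intro x hx
    rcases List.mem_or_eq_of_mem_set hx with hx | rfl
    exacts [hpos x hx, by omega]

lemma pairwise_removeCell (hs : l.Pairwise (· ≥ ·)) (hpos : ∀ x ∈ l, 0 < x)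
    (hcorner : l.getD (c + 1) 0 < l.getD c 0) : (removeCell c l).Pairwise (· ≥ ·) := by
  refine pairwise_ge_of_getD fun a b hab => ?_
  rw [getD_removeCell hpos hcorner, getD_removeCell hpos hcorner]
  have := getD_antitone hs hab
  split_ifs <;> try omega
  rename_i ha
  subst ha
  have := getD_antitone hs (show a + 1 ≤ b by omega)
  omega

lemma cells_removeCell (hpos : ∀ x ∈ l, 0 < x) (hcorner : l.getD (c + 1) 0 < l.getD c 0) :
    Cells (removeCell c l) = Cells l \ {(c, l.getD c 0 - 1)} := by
  ext ⟨a, r⟩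
  simp only [mem_cells_iff (pos_removeCell hpos hcorner), mem_cells_iff hpos,
    getD_removeCell hpos hcorner, Set.mem_sdiff, Set.mem_singleton_iff, Prod.mk.injEq]
  split_ifs with h
  · subst h; omega
  · simp [h]

lemma addable_removeCell (hs : l.Pairwise (· ≥ ·)) (hpos : ∀ x ∈ l, 0 < x)
    (hcorner : l.getD (c + 1) 0 < l.getD c 0) : Addable c (removeCell c l) := by
  rcases Nat.eq_zero_or_pos c with h | h
  · exact Or.inl h
  · right
    rw [getD_removeCell hpos hcorner, getD_removeCell hpos hcorner, if_pos rfl, if_neg (by omega)]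
    have := getD_antitone hs (Nat.sub_le c 1)
    omega

lemma corner_addCell (hs : l.Pairwise (· ≥ ·)) (hc : c ≤ l.length) :
    (addCell c l).getD (c + 1) 0 < (addCell c l).getD c 0 := by
  rw [getD_addCell hc, getD_addCell hc, if_pos rfl, if_neg (by omega)]
  have := getD_antitone hs (show c ≤ c + 1 by omega)
  omega

lemma removeCell_addCell (hs : l.Pairwise (· ≥ ·)) (hpos : ∀ x ∈ l, 0 < x) (hc : c ≤ l.length) :
    removeCell c (addCell c l) = l := by
  have hcorner := corner_addCell hs hc
  refine eq_of_getD_eq (pos_removeCell (pos_addCell c hpos) hcorner) hpos fun k => ?_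
  rw [getD_removeCell (pos_addCell c hpos) hcorner, getD_addCell hc]
  split_ifs <;> rfl

lemma addCell_removeCell (hs : l.Pairwise (· ≥ ·)) (hpos : ∀ x ∈ l, 0 < x)
    (hcorner : l.getD (c + 1) 0 < l.getD c 0) : addCell c (removeCell c l) = l := by
  have hc := (addable_removeCell hs hpos hcorner).le_length (pos_removeCell hpos hcorner)
  refine eq_of_getD_eq (pos_addCell c (pos_removeCell hpos hcorner)) hpos fun k => ?_
  rw [getD_addCell hc, getD_removeCell hpos hcorner]
  split_ifs with h
  · subst h; omega
  · rfl

end SYT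

open Function

lemma update_lt_update_of_insert {α β : Type*} [DecidableEq α] [Preorder β] {S : Set α}
    {T : α → β} {x : α} {N : β} {R : α → α → Prop} (hx : x ∉ S)
    (hT : ∀ p ∈ S, ∀ q ∈ S, R p q → T p < T q)
    (hN : ∀ p ∈ S, T p < N) (hmax : ∀ q ∈ insert x S, ¬ R x q) :
    ∀ p ∈ insert x S, ∀ q ∈ insert x S, R p q → update T x N p < update T x N q := by
  have hold : ∀ q ∈ S, update T x N q = T q := fun q hq =>
    update_of_ne (ne_of_mem_of_not_mem hq hx) _ _
  rintro p hp q hq hpq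
  rcases hp with rfl | hp
  · exact absurd hpq (hmax q hq)
  rcases hq with rfl | hq
  · rw [update_self, hold p hp]
    exact hN p hp
  · rw [hold p hp, hold q hq]
    exact hT p hp q hq hpq

namespace IsSYT

variable {l l' : List ℕ} {T : ℕ × ℕ → ℕ}

lemma cells_eq (hT : IsSYT l T) : Cells l = {q | T q ≠ 0} := by
  ext q
  refine ⟨fun hq => ?_, fun hq => ?_⟩
  · exact (Nat.one_le_iff_ne_zero.1 (hT.1.mapsTo hq).1 :)
  · by_contra h
    exact hq (hT.2.2.2 q h)

lemma apply_le_sum (hT : IsSYT l T) (q : ℕ × ℕ) : T q ≤ l.sum := by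
  by_cases hq : q ∈ Cells l
  · exact (hT.1.mapsTo hq).2
  · rw [hT.2.2.2 q hq]
    exact Nat.zero_le _

lemma update_insert (hT : IsSYT l T) {x : ℕ × ℕ}
    (hcells : Cells l' = insert x (Cells l)) (hsum : l'.sum = l.sum + 1)
    (hcol : ∀ q ∈ Cells l, q.1 = x.1 → q.2 < x.2) (hrow : ∀ q ∈ Cells l, q.2 = x.2 → q.1 < x.1) :
    IsSYT l' (update T x (l.sum + 1)) := by
  obtain ⟨hbij, hcolT, hrowT, hzero⟩ := hT
  have hx : x ∉ Cells l := fun h => (hcol x h rfl).false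
  have hN : ∀ q ∈ Cells l, T q < l.sum + 1 := fun q hq => Nat.lt_succ_of_le (hbij.mapsTo hq).2
  refine ⟨?_, ?_, ?_, ?_⟩
  · rw [hcells, hsum, ← Set.insert_Icc_right_eq_Icc_add_one (by omega)]
    have := (hbij.congr fun q hq => (update_of_ne (ne_of_mem_of_not_mem hq hx)
      (l.sum + 1) T).symm).insert (a := x) (fun h => by simpa using h.2)
    rwa [update_self] at this
  · rw [hcells]
    refine fun p hp q hq he hlt => update_lt_update_of_insert
      (R := fun p q => p.1 = q.1 ∧ p.2 < q.2) hx (fun p hp q hq h => hcolT p hp q hq h.1 h.2) hN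
      ?_ p hp q hq ⟨he, hlt⟩
    rintro q (rfl | hq) ⟨he, hlt⟩
    exacts [hlt.false, (hcol q hq he.symm).asymm hlt]
  · rw [hcells]
    refine fun p hp q hq he hlt => update_lt_update_of_insert
      (R := fun p q => p.2 = q.2 ∧ p.1 < q.1) hx (fun p hp q hq h => hrowT p hp q hq h.1 h.2) hN
      ?_ p hp q hq ⟨he, hlt⟩
    rintro q (rfl | hq) ⟨he, hlt⟩
    exacts [hlt.false, (hrow q hq he.symm).asymm hlt]
  · intro q hq
    rw [hcells] at hq
    obtain ⟨hqx, hq⟩ := not_or.1 hq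
    rw [update_of_ne hqx, hzero q hq]

lemma update_erase (hT : IsSYT l' T) {x : ℕ × ℕ} (hx : x ∈ Cells l') (hTx : T x = l'.sum)
    (hcells : Cells l = Cells l' \ {x}) (hsum : l.sum + 1 = l'.sum) :
    IsSYT l (update T x 0) := by
  obtain ⟨hbij, hcolT, hrowT, hzero⟩ := hT
  have hold : ∀ q ∈ Cells l, update T x 0 q = T q := fun q hq =>
    update_of_ne (by rw [hcells] at hq; exact hq.2) _ _
  have hsub : Cells l ⊆ Cells l' := hcells ▸ Set.sdiff_subset
  refine ⟨?_, ?_, ?_, ?_⟩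
  · have := hbij.sdiff_singleton hx
    rw [hTx, Set.Icc_sdiff_right, ← hsum, Set.Ico_add_one_right_eq_Icc, ← hcells] at this
    exact this.congr fun q hq => (hold q hq).symm
  · intro p hp q hq
    rw [hold p hp, hold q hq]
    exact hcolT p (hsub hp) q (hsub hq)
  · intro p hp q hq
    rw [hold p hp, hold q hq]
    exact hrowT p (hsub hp) q (hsub hq)
  · intro q hq
    by_cases hqx : q = x
    · rw [hqx, update_self]
    · rw [update_of_ne hqx]
      exact hzero q fun h => hq (hcells ▸ ⟨h, hqx⟩)

lemma corner_of_apply_eq_sum (hT : IsSYT l T) (hpos : ∀ x ∈ l, 0 < x) {c r : ℕ}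
    (hr : T (c, r) = l.sum) (hsum : 0 < l.sum) :
    r = l.getD c 0 - 1 ∧ l.getD (c + 1) 0 < l.getD c 0 := by
  have hx : (c, r) ∈ Cells l := by
    rw [hT.cells_eq]
    exact (hr.trans_ne hsum.ne' :)
  have hbelow : ¬ r + 1 < l.getD c 0 := fun h => by
    have := hT.2.1 (c, r) hx (c, r + 1) ⟨hx.1, h⟩ rfl (lt_add_one r)
    have := hT.apply_le_sum (c, r + 1)
    omega
  have hright : ¬ r < l.getD (c + 1) 0 := fun h => by
    have := hT.2.2.1 (c, r) hx (c + 1, r) ((SYT.mem_cells_iff hpos).2 h) rfl (lt_add_one c)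
    have := hT.apply_le_sum (c + 1, r)
    omega
  have : r < l.getD c 0 := hx.2
  omega

end IsSYT

namespace SYT

def Tableaux (s n : ℕ) : Set (List ℕ × (ℕ × ℕ → ℕ)) :=
  {p | p.1.length ≤ s ∧ p.1.Pairwise (· ≥ ·) ∧ (∀ x ∈ p.1, 0 < x) ∧ p.1.sum = n ∧
    IsSYT p.1 p.2}

lemma mem_Y_iff :
    p ∈ Y s n i ↔ p ∈ Tableaux s n ∧ p.1.getD 1 0 - p.1.getD 2 0 = i :=
  ⟨fun ⟨h₁, h₂, h₃, h₄, h₅, h₆⟩ => ⟨⟨h₁, h₂, h₃, h₄, h₆⟩, h₅⟩,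
    fun ⟨⟨h₁, h₂, h₃, h₄, h₆⟩, h₅⟩ => ⟨h₁, h₂, h₃, h₄, h₅, h₆⟩⟩

def addEntry (c : ℕ) (p : List ℕ × (ℕ × ℕ → ℕ)) : List ℕ × (ℕ × ℕ → ℕ) :=
  (addCell c p.1, update p.2 (c, p.1.getD c 0) (p.1.sum + 1))

def removeEntry (c : ℕ) (p : List ℕ × (ℕ × ℕ → ℕ)) : List ℕ × (ℕ × ℕ → ℕ) :=
  (removeCell c p.1, update p.2 (c, p.1.getD c 0 - 1) 0)

variable {s m n i c r : ℕ} {p : List ℕ × (ℕ × ℕ → ℕ)}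

lemma addEntry_mem (hcs : c < s) (hp : p ∈ Tableaux s m) (hadd : Addable c p.1) :
    addEntry c p ∈ Tableaux s (m + 1) ∧ ∃ r, (addEntry c p).2 (c, r) = m + 1 := by
  obtain ⟨hlen, hs, hpos, hsum, hT⟩ := hp
  have hc := hadd.le_length hpos
  refine ⟨⟨?_, pairwise_addCell hc hs hadd, pos_addCell c hpos, by
    rw [addEntry, sum_addCell, hsum], ?_⟩, p.1.getD c 0, by simp [addEntry, hsum]⟩
  · rw [addEntry, length_addCell hc]
    omega
  · refine hT.update_insert (cells_addCell hc hpos) (sum_addCell c _) (fun q hq he => ?_)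
      fun q hq he => ?_
    · rwa [mem_cells_iff hpos, he] at hq
    · dsimp only at he ⊢
      by_contra h
      have := getD_antitone hs (not_lt.1 h)
      rw [mem_cells_iff hpos] at hq
      omega

lemma removeEntry_mem (hp : p ∈ Tableaux s (m + 1)) (hr : p.2 (c, r) = m + 1) :
    removeEntry c p ∈ Tableaux s m ∧ Addable c (removeEntry c p).1 := by
  obtain ⟨hlen, hs, hpos, hsum, hT⟩ := hp
  obtain ⟨rfl, hcorner⟩ := hT.corner_of_apply_eq_sum hpos (hr.trans hsum.symm) (by omega)
  have hsum' := sum_removeCell hpos hcorner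
  refine ⟨⟨(length_removeCell_le c _).trans hlen, pairwise_removeCell hs hpos hcorner,
    pos_removeCell hpos hcorner, by simp only [removeEntry]; omega, ?_⟩,
    addable_removeCell hs hpos hcorner⟩
  have hx : (c, p.1.getD c 0 - 1) ∈ Cells p.1 :=
    (mem_cells_iff hpos).2 (show p.1.getD c 0 - 1 < p.1.getD c 0 by omega)
  exact hT.update_erase hx (hr.trans hsum.symm) (cells_removeCell hpos hcorner) hsum'

lemma removeEntry_addEntry (hp : p ∈ Tableaux s m) (hadd : Addable c p.1) :
    removeEntry c (addEntry c p) = p := by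
  obtain ⟨-, hs, hpos, -, hT⟩ := hp
  have hc := hadd.le_length hpos
  have hx : (c, p.1.getD c 0) ∉ Cells p.1 := fun h => ((mem_cells_iff hpos).1 h).false
  refine Prod.ext (removeCell_addCell hs hpos hc) ?_
  simp only [addEntry, removeEntry, getD_addCell hc, ↓reduceIte, Nat.add_sub_cancel, update_idem]
  exact update_eq_self_iff.2 (hT.2.2.2 _ hx).symm

lemma addEntry_removeEntry (hp : p ∈ Tableaux s (m + 1)) (hr : p.2 (c, r) = m + 1) :
    addEntry c (removeEntry c p) = p := by
  obtain ⟨-, hs, hpos, hsum, hT⟩ := hp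
  obtain ⟨rfl, hcorner⟩ := hT.corner_of_apply_eq_sum hpos (hr.trans hsum.symm) (by omega)
  refine Prod.ext (addCell_removeCell hs hpos hcorner) ?_
  simp only [addEntry, removeEntry, getD_removeCell hpos hcorner, ↓reduceIte, update_idem]
  rw [sum_removeCell hpos hcorner, hsum]
  exact update_eq_self_iff.2 hr.symm

lemma finite_tableaux (s n : ℕ) : (Tableaux s n).Finite := by
  have hbound : ∀ p ∈ Tableaux s n, ∀ q, ¬ (q.1 < n ∧ q.2 < n) → p.2 q = 0 := by
    rintro p ⟨-, -, hpos, hsum, hT⟩ q hq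
    by_contra h0
    have hq' : q ∈ Cells p.1 := hT.cells_eq ▸ h0
    exact hq ⟨hq'.1.trans_le (hsum ▸ length_le_sum hpos),
      hq'.2.trans_le (hsum ▸ getD_le_sum _ _)⟩
  have hfun : (Prod.snd '' Tableaux s n).Finite := by
    refine Set.Finite.of_injOn (f := fun T (a : Fin n × Fin n) => T (a.1, a.2))
      (t := Set.univ.pi fun _ => Set.Iic n) ?_ ?_ (Set.Finite.pi fun _ => Set.finite_Iic n)
    · rintro _ ⟨p, hp, rfl⟩ a -
      exact (hp.2.2.2.2.apply_le_sum _).trans_eq hp.2.2.2.1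
    · rintro _ ⟨p, hp, rfl⟩ _ ⟨p', hp', rfl⟩ h
      funext q
      by_cases hq : q.1 < n ∧ q.2 < n
      · exact congrFun h (⟨q.1, hq.1⟩, ⟨q.2, hq.2⟩)
      · rw [hbound p hp q hq, hbound p' hp' q hq]
  refine hfun.of_finite_image fun p hp p' hp' h => Prod.ext ?_ h
  exact eq_of_cells_eq hp.2.2.1 hp'.2.2.1 <| by
    rw [hp.2.2.2.2.cells_eq, hp'.2.2.2.2.cells_eq, h]

lemma finite_Y (s n i : ℕ) : (Y s n i).Finite :=
  (finite_tableaux s n).subset fun _ hp => (mem_Y_iff.1 hp).1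

def YmaxCol (s n i c : ℕ) : Set (List ℕ × (ℕ × ℕ → ℕ)) :=
  {p | p ∈ Y s n i ∧ ∃ r, p.2 (c, r) = n}

lemma gamma_eq_sum_card_YmaxCol (hn : 1 ≤ n) :
    gamma s n i = ∑ c ∈ Finset.range s, Nat.card (YmaxCol s n i c) := by
  have (c : Fin s) : Finite (YmaxCol s n i c) :=
    ((finite_Y s n i).subset fun _ hp => hp.1).to_subtype
  rw [← Fin.sum_univ_eq_sum_range (fun c => Nat.card (YmaxCol s n i c)), ← Nat.card_sigma, gamma]
  refine (Nat.card_eq_of_bijective (fun x => ⟨x.2.1, x.2.2.1⟩) ⟨?_, fun ⟨p, hp⟩ => ?_⟩).symm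
  · intro ⟨c, p, hp, r, hr⟩ ⟨c', p', _, r', hr'⟩ h
    obtain rfl : p = p' := congrArg Subtype.val h
    have hT := (mem_Y_iff.1 hp).1.2.2.2.2
    have hmem : ∀ {c r}, p.2 (c, r) = n → (c, r) ∈ Cells p.1 := fun {c r} h => by
      rw [hT.cells_eq]
      exact (h.trans_ne (show n ≠ 0 by omega) :)
    obtain rfl : c = c' :=
      Fin.ext (congrArg Prod.fst (hT.1.injOn (hmem hr) (hmem hr') (hr.trans hr'.symm)))
    rfl
  · obtain ⟨⟨hlen, -, -, hsum, hT⟩, -⟩ := mem_Y_iff.1 hp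
    obtain ⟨q, hq, hqn⟩ := hT.1.surjOn (show n ∈ Set.Icc 1 p.1.sum by
      rw [hsum]; exact ⟨hn, le_rfl⟩)
    exact ⟨⟨⟨q.1, hq.1.trans_le hlen⟩, p, hp, q.2, hqn⟩, rfl⟩

lemma card_addable_add_rj (hc : 1 ≤ c) :
    Nat.card {p | p ∈ Y s m i ∧ Addable c p.1} + rj s c m i = gamma s m i := by
  have hrj : rj s c m i = Nat.card ↥(Y s m i \ {p | Addable c p.1}) := by
    refine Nat.card_congr (Equiv.subtypeEquivRight fun p => and_congr_right fun hp => ?_)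
    have := getD_antitone (mem_Y_iff.1 hp).1.2.1 (Nat.sub_le c 1)
    change _ ↔ ¬ Addable c p.1
    simp only [Addable]
    omega
  rw [hrj, gamma, Nat.card_coe_set_eq, Nat.card_coe_set_eq, Nat.card_coe_set_eq]
  exact Set.ncard_inter_add_ncard_sdiff_eq_ncard _ _ (finite_Y s m i)

lemma card_YmaxCol_eq (hcs : c < s) {i' : ℕ}
    (hdiff : ∀ l : List ℕ, l.Pairwise (· ≥ ·) → Addable c l →
      ((l.getD 1 0 + if 1 = c then 1 else 0) - (l.getD 2 0 + if 2 = c then 1 else 0) = i ↔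
        l.getD 1 0 - l.getD 2 0 = i')) :
    Nat.card (YmaxCol s (m + 1) i c) = Nat.card {p | p ∈ Y s m i' ∧ Addable c p.1} := by
  have hdiff' : ∀ p ∈ Tableaux s m, Addable c p.1 →
      ((addEntry c p).1.getD 1 0 - (addEntry c p).1.getD 2 0 = i ↔
        p.1.getD 1 0 - p.1.getD 2 0 = i') := fun p hp hadd => by
    rw [addEntry, getD_addCell (hadd.le_length hp.2.2.1), getD_addCell (hadd.le_length hp.2.2.1)]
    exact hdiff p.1 hp.2.1 hadd
  refine (Nat.card_congr (Set.BijOn.equiv (addEntry c) ?_)).symm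
  refine Set.InvOn.bijOn (f' := removeEntry c) ⟨?_, ?_⟩ ?_ ?_
  · rintro p ⟨hY, hadd⟩
    exact removeEntry_addEntry (mem_Y_iff.1 hY).1 hadd
  · rintro p ⟨hY, r, hr⟩
    exact addEntry_removeEntry (mem_Y_iff.1 hY).1 hr
  · rintro p ⟨hY, hadd⟩
    obtain ⟨hp, hd⟩ := mem_Y_iff.1 hY
    obtain ⟨hmem, hmax⟩ := addEntry_mem hcs hp hadd
    exact ⟨mem_Y_iff.2 ⟨hmem, (hdiff' p hp hadd).2 hd⟩, hmax⟩
  · rintro p ⟨hY, r, hr⟩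
    obtain ⟨hp, hd⟩ := mem_Y_iff.1 hY
    obtain ⟨hmem, hadd⟩ := removeEntry_mem hp hr
    rw [← addEntry_removeEntry hp hr, hdiff' _ hmem hadd] at hd
    exact ⟨mem_Y_iff.2 ⟨hmem, hd⟩, hadd⟩

lemma card_YmaxCol_zero (hs : 0 < s) : Nat.card (YmaxCol s (m + 1) i 0) = gamma s m i := by
  rw [card_YmaxCol_eq (i' := i) hs fun l _ _ => by simp, gamma,
    show {p | p ∈ Y s m i ∧ Addable 0 p.1} = Y s m i from
      Set.sep_eq_self_iff_mem_true.2 fun _ _ => Or.inl rfl]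

lemma card_YmaxCol_one (hs : 1 < s) (hi : 1 ≤ i) :
    Nat.card (YmaxCol s (m + 1) i 1) = Nat.card {p | p ∈ Y s m (i - 1) ∧ Addable 1 p.1} :=
  card_YmaxCol_eq (i' := i - 1) hs fun l hl _ => by
    have := getD_antitone hl (show 1 ≤ 2 by omega)
    rw [if_pos rfl, if_neg (by omega)]
    omega

lemma card_YmaxCol_two (hs : 2 < s) : Nat.card (YmaxCol s (m + 1) i 2) = gamma s m (i + 1) := by
  rw [card_YmaxCol_eq (i' := i + 1) hs fun l _ hadd => ?_, gamma,
    show {p | p ∈ Y s m (i + 1) ∧ Addable 2 p.1} = Y s m (i + 1) from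
      Set.sep_eq_self_iff_mem_true.2 fun p hp => Or.inr (show p.1.getD 2 0 < p.1.getD 1 0 by
        have := (mem_Y_iff.1 hp).2; omega)]
  have : l.getD 2 0 < l.getD 1 0 := hadd.resolve_left (by omega)
  rw [if_neg (by omega), if_pos rfl]
  omega

lemma card_YmaxCol_of_three_le (hcs : c < s) (hc : 3 ≤ c) :
    Nat.card (YmaxCol s (m + 1) i c) = Nat.card {p | p ∈ Y s m i ∧ Addable c p.1} :=
  card_YmaxCol_eq (i' := i) hcs fun l _ _ => by
    rw [if_neg (by omega), if_neg (by omega)]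
    rfl

end SYT

open SYT

theorem stmt14_general (s n i : ℕ) (hs : 4 ≤ s) (hn : s ≤ n) (hi : 1 ≤ i) :
    gamma s n i + rj s 1 (n - 1) (i - 1) +
        (∑ j ∈ Finset.Icc 3 (s - 1), rj s j (n - 1) i) =
      gamma s (n - 1) (i - 1) + (s - 2) * gamma s (n - 1) i +
        gamma s (n - 1) (i + 1) := by
  obtain ⟨m, rfl⟩ : ∃ m, n = m + 1 := ⟨n - 1, by omega⟩
  have hcol_one := card_addable_add_rj (s := s) (m := m) (i := i - 1) le_rfl
  have hcols_high : ∑ c ∈ Finset.Ico 3 s, Nat.card (YmaxCol s (m + 1) i c) +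
      ∑ c ∈ Finset.Ico 3 s, rj s c m i = (s - 3) * gamma s m i := by
    rw [← Finset.sum_add_distrib, Finset.sum_congr rfl fun c hc => by
      rw [card_YmaxCol_of_three_le (Finset.mem_Ico.1 hc).2 (Finset.mem_Ico.1 hc).1,
        card_addable_add_rj (by grind)], Finset.sum_const, Nat.card_Ico, smul_eq_mul]
  rw [Nat.add_sub_cancel, gamma_eq_sum_card_YmaxCol (by omega),
    ← Finset.sum_range_add_sum_Ico _ (show 3 ≤ s by omega), Finset.sum_range_succ,
    Finset.sum_range_succ, Finset.sum_range_one, card_YmaxCol_zero (by omega),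
    card_YmaxCol_one (by omega) hi, card_YmaxCol_two (by omega),
    show Finset.Icc 3 (s - 1) = Finset.Ico 3 s by grind, show s - 2 = s - 3 + 1 by omega,
    add_one_mul]
  omega

theorem stmt14 (s n i : ℕ) (hs : 4 ≤ s) (hn : s ≤ n) (hi : 1 ≤ i) (hi' : i ≤ n / 2) :
    gamma s n i + rj s 1 (n - 1) (i - 1) +
        (∑ j ∈ Finset.Icc 3 (s - 1), rj s j (n - 1) i) =
      gamma s (n - 1) (i - 1) + (s - 2) * gamma s (n - 1) i +
        gamma s (n - 1) (i + 1) :=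
  stmt14_general s n i hs hn hi
end

section
/- The Motzkin numbers satisfy M_n < 3·M_{n−1} for all n ≥ 1, and lim_{n→∞} M_n/M_{n−1} = 3. -/
/-!
The generating function `F = ∑ Mₙ Xⁿ` satisfies `F = 1 + X F + X² F²`. Eliminating `F F'` from
the derivative of this equation gives the linear recurrence
`(n + 4) M_{n+2} = (2n + 5) M_{n+1} + 3(n + 1) M_n`, from which
`3(n + 1)/(n + 3) ≤ M_{n+1}/M_n < 3` follows by induction; the limit is then a squeeze.
-/

open Filter Topology

/-- The Motzkin numbers: `M 0 = 1`, `M 1 = 1`,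
`M (n+1) = M n + ∑_{k=0}^{n-1} M k * M (n-1-k)`. -/
def motzkin : ℕ → ℕ
  | 0 => 1
  | n + 1 =>
    motzkin n + ∑ k ∈ (Finset.range n).attach,
      motzkin k.1 * motzkin (n - 1 - k.1)
decreasing_by
  · omega
  · have := k.2; simp only [Finset.mem_range] at this; omega
  · omega

lemma motzkin_zero : motzkin 0 = 1 := by rw [motzkin]

lemma motzkin_succ (n : ℕ) :
    motzkin (n + 1) = motzkin n + ∑ k ∈ Finset.range n, motzkin k * motzkin (n - 1 - k) := by
  rw [motzkin, Finset.sum_attach (Finset.range n) fun k => motzkin k * motzkin (n - 1 - k)]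

lemma motzkin_pos (n : ℕ) : 0 < motzkin n := by
  induction n with
  | zero => simp [motzkin_zero]
  | succ n ih => rw [motzkin_succ]; exact ih.trans_le (Nat.le_add_right _ _)

namespace PowerSeries

variable {R : Type*}

theorem coeff_ofNat_mul [Semiring R] (k : ℕ) [k.AtLeastTwo] (f : R⟦X⟧) (n : ℕ) :
    coeff n (ofNat(k) * f) = ofNat(k) * coeff n f := by
  rw [← map_ofNat C, coeff_C_mul]

theorem coeff_X_mul_derivative [CommSemiring R] (f : R⟦X⟧) (n : ℕ) :
    coeff n (X * d⁄dX R f) = n * coeff n f := by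
  cases n with
  | zero => simp
  | succ n => rw [coeff_succ_X_mul, coeff_derivative, mul_comm]; push_cast; rfl

end PowerSeries

open PowerSeries

noncomputable def motzkinSeries : ℤ⟦X⟧ := mk fun n => (motzkin n : ℤ)

lemma coeff_motzkinSeries (n : ℕ) : coeff n motzkinSeries = motzkin n := coeff_mk _ _

lemma motzkinSeries_eq : motzkinSeries = 1 + X * motzkinSeries + X ^ 2 * motzkinSeries ^ 2 := by
  ext (_ | _ | n)
  · simp [coeff_motzkinSeries, motzkin_zero]
  · simp [coeff_motzkinSeries, motzkin_succ, motzkin_zero, coeff_X_pow_mul']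
  · rw [map_add, map_add, coeff_succ_X_mul, coeff_X_pow_mul', if_pos (by omega), sq, coeff_mul,
      Finset.Nat.sum_antidiagonal_eq_sum_range_succ fun i j =>
        coeff i motzkinSeries * coeff j motzkinSeries]
    simp [coeff_motzkinSeries, motzkin_succ (n + 1), coeff_one]

/-- Differentiating the functional equation gives `F' (1 - X - 2X²F) = F + 2XF²`; multiplying by
`1 - X - 2X²F`, whose square is `1 - 2X - 3X²` by the functional equation, removes `F F'`. -/
lemma motzkinSeries_differential_eq :
    X * d⁄dX ℤ motzkinSeries + 2 * motzkinSeries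
      = 2 + X * (2 * (X * d⁄dX ℤ motzkinSeries) + 3 * motzkinSeries)
        + X ^ 2 * (3 * (X * d⁄dX ℤ motzkinSeries) + 3 * motzkinSeries) := by
  set F := motzkinSeries
  have hF : F = 1 + X * F + X ^ 2 * F ^ 2 := motzkinSeries_eq
  have hF' : d⁄dX ℤ F * (1 - X - 2 * X ^ 2 * F) = F + 2 * X * F ^ 2 := by
    have h := congrArg (d⁄dX ℤ) hF
    simp only [map_add, Derivation.leibniz, Derivation.leibniz_pow, derivative_X,
      derivative_one, smul_eq_mul, nsmul_eq_mul] at h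
    push_cast at h
    linear_combination h
  linear_combination
    X * (1 - X - 2 * X ^ 2 * F) * hF' + (4 * X ^ 3 * d⁄dX ℤ F + 4 * X ^ 2 * F + 2) * hF

lemma motzkin_recurrence (n : ℕ) :
    (n + 4) * motzkin (n + 2) = (2 * n + 5) * motzkin (n + 1) + (3 * n + 3) * motzkin n := by
  have h := congrArg (coeff (n + 2)) motzkinSeries_differential_eq
  have h2 : coeff (n + 2) (2 : ℤ⟦X⟧) = 0 := by rw [← map_ofNat C 2, coeff_C, if_neg (by omega)]
  simp only [map_add, coeff_ofNat_mul, coeff_X_pow_mul, coeff_succ_X_mul, coeff_X_mul_derivative,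
    coeff_derivative, coeff_motzkinSeries, h2] at h
  push_cast at h
  zify
  linear_combination h

/-- The two bounds feed each other through `motzkin_recurrence`. -/
lemma motzkin_ratio_bounds (n : ℕ) :
    motzkin (n + 1) < 3 * motzkin n ∧ 3 * (n + 1) * motzkin n ≤ (n + 3) * motzkin (n + 1) := by
  induction n with
  | zero => simp [motzkin_succ, motzkin_zero]
  | succ n ih =>
    obtain ⟨hupper, hlower⟩ := ih
    have hrec := motzkin_recurrence n
    constructor
    · nlinarith [motzkin_pos (n + 1)]
    · nlinarith

lemma motzkin_succ_div_le_three (n : ℕ) : (motzkin (n + 1) : ℝ) / motzkin n ≤ 3 := by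
  rw [div_le_iff₀ (by exact_mod_cast motzkin_pos n)]
  exact_mod_cast (motzkin_ratio_bounds n).1.le

lemma le_motzkin_succ_div (n : ℕ) :
    3 * ((n : ℝ) + 1) / (n + 3) ≤ (motzkin (n + 1) : ℝ) / motzkin n := by
  rw [div_le_div_iff₀ (by positivity) (by exact_mod_cast motzkin_pos n)]
  have h := (motzkin_ratio_bounds n).2
  rw [← Nat.cast_le (α := ℝ)] at h
  push_cast at h
  linarith

theorem stmt18 :
    (∀ n : ℕ, 1 ≤ n → motzkin n < 3 * motzkin (n - 1)) ∧
    Tendsto (fun n : ℕ => (motzkin (n + 1) : ℝ) / (motzkin n : ℝ)) atTop (𝓝 3) := by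
  refine ⟨fun n hn => ?_, ?_⟩
  · obtain ⟨m, rfl⟩ := Nat.exists_eq_add_of_le' hn
    exact (motzkin_ratio_bounds m).1
  · have hlower : Tendsto (fun n : ℕ => 3 * ((n : ℝ) + 1) / (n + 3)) atTop (𝓝 3) := by
      convert tendsto_add_mul_div_add_mul_atTop_nhds (3 : ℝ) 3 3 one_ne_zero using 2 <;> ring
    exact tendsto_of_tendsto_of_tendsto_of_le_of_le hlower tendsto_const_nhds
      le_motzkin_succ_div motzkin_succ_div_le_three
end
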